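/- Let (a_i)_{i≥1} and (v_i)_{i≥1} be nonnegative reals with A := Σ a_i < 1 and V := Σ v_i < ∞. With G₁ and G₂ defined by G₁(1)=1, G₁(k)=1+Σ_{i=1}^{k-1} a_i G₁(k-i), G₂(1)=0, G₂(k)=Σ_{i=1}^{k-1} a_i G₂(k-i) + (1/2)Σ_{i=1}^{k-1} v_i G₁(k-i)², one has (1/n) Σ_{k=1}^n G₂(k) → V/(2(1-A)³) as n → ∞. -/

import Mathlib

/-!
Both `G₁` and `G₂` solve a renewal equation `x k = f k + ∑_{0<i<k} a i x (k - i)` with a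
nonnegative, nondecreasing, convergent forcing term `f`. Since `∑ a i = A < 1`, such a solution
is nondecreasing and bounded by `lim f / (1 - A)`, hence convergent, and passing to the limit
in the equation (dominated convergence for the convolution) shows `lim x = lim f / (1 - A)`.
For `G₁` the forcing term is `1`, so `G₁ → 1 / (1 - A)`; for `G₂` it is
`½ ∑ v i G₁ (k - i)²`, which tends to `V / (2 (1 - A)²)`, so `G₂ → V / (2 (1 - A)³)`, and
Cesàro means inherit the limit.
-/

open Filter Finset Topology

noncomputable def causalConv (c g : ℕ → ℝ) (k : ℕ) : ℝ :=
  ∑ i ∈ Icc 1 (k - 1), c i * g (k - i)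

lemma sum_Icc_one_eq_sum_range {M : Type*} [AddCommMonoid M] (f : ℕ → M) (n : ℕ) :
    ∑ i ∈ Icc 1 n, f i = ∑ j ∈ range n, f (j + 1) := by
  rw [range_eq_Ico, sum_Ico_add', zero_add, Ico_add_one_right_eq_Icc]

section causalConv

variable {c g : ℕ → ℝ}

@[simp]
lemma causalConv_one : causalConv c g 1 = 0 := by
  simp [causalConv]

lemma causalConv_le_causalConv_succ (hc : ∀ i, 0 ≤ c i) (k : ℕ) (hg₁ : 0 ≤ g 1)
    (hg : ∀ j, 1 ≤ j → j < k → g j ≤ g (j + 1)) :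
    causalConv c g k ≤ causalConv c g (k + 1) := by
  rcases Nat.eq_zero_or_pos k with rfl | hk
  · simp [causalConv]
  obtain ⟨m, rfl⟩ : ∃ m, k = m + 1 := ⟨k - 1, by omega⟩
  have hsucc : causalConv c g (m + 1 + 1)
      = ∑ i ∈ Icc 1 m, c i * g (m + 1 + 1 - i) + c (m + 1) * g 1 := by
    rw [causalConv, Nat.add_sub_cancel, sum_Icc_succ_top (by omega), Nat.add_sub_cancel_left]
  have hshift : causalConv c g (m + 1) ≤ ∑ i ∈ Icc 1 m, c i * g (m + 1 + 1 - i) :=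
    sum_le_sum fun i hi => by
      rw [mem_Icc] at hi
      rw [show m + 1 + 1 - i = m + 1 - i + 1 by omega]
      exact mul_le_mul_of_nonneg_left (hg _ (by omega) (by omega)) (hc i)
  linarith [mul_nonneg (hc (m + 1)) hg₁]

lemma causalConv_succ_monotone (hc : ∀ i, 0 ≤ c i) (hg₁ : 0 ≤ g 1)
    (hg : Monotone fun n => g (n + 1)) : Monotone fun n => causalConv c g (n + 1) :=
  monotone_nat_of_le_succ fun n => causalConv_le_causalConv_succ hc _ hg₁ fun j hj _ => by
    obtain ⟨m, rfl⟩ : ∃ m, j = m + 1 := ⟨j - 1, by omega⟩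
    exact hg (Nat.le_succ m)

lemma causalConv_le_tsum_mul (hc : ∀ i, 0 ≤ c i) (hsc : Summable fun i => c (i + 1)) {M : ℝ}
    (hM : 0 ≤ M) (k : ℕ) (hg : ∀ j, 1 ≤ j → j < k → g j ≤ M) :
    causalConv c g k ≤ (∑' i, c (i + 1)) * M :=
  calc causalConv c g k ≤ ∑ i ∈ Icc 1 (k - 1), c i * M :=
        sum_le_sum fun i hi => by
          rw [mem_Icc] at hi
          exact mul_le_mul_of_nonneg_left (hg _ (by omega) (by omega)) (hc i)
    _ = (∑ j ∈ range (k - 1), c (j + 1)) * M := by rw [← sum_mul, sum_Icc_one_eq_sum_range]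
    _ ≤ (∑' i, c (i + 1)) * M :=
        mul_le_mul_of_nonneg_right (hsc.sum_le_tsum _ fun j _ => hc _) hM

lemma causalConv_eq_tsum (c g : ℕ → ℝ) (k : ℕ) :
    causalConv c g k = ∑' j, if j + 2 ≤ k then c (j + 1) * g (k - (j + 1)) else 0 := by
  rw [tsum_eq_sum (s := range (k - 1)) fun j hj => if_neg (by simp at hj; omega),
    causalConv, sum_Icc_one_eq_sum_range]
  exact sum_congr rfl fun j hj => (if_pos (by simp at hj; omega)).symm

lemma tendsto_causalConv (hc : Summable fun i => ‖c (i + 1)‖) {L : ℝ}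
    (hg : Tendsto (fun n => g (n + 1)) atTop (𝓝 L)) :
    Tendsto (causalConv c g) atTop (𝓝 ((∑' i, c (i + 1)) * L)) := by
  obtain ⟨C, hC⟩ := isBounded_iff_forall_norm_le.mp (Metric.isBounded_range_of_tendsto _ hg)
  have hC₀ : 0 ≤ C := (norm_nonneg _).trans (hC _ ⟨0, rfl⟩)
  rw [funext (causalConv_eq_tsum c g), ← tsum_mul_right]
  refine tendsto_tsum_of_dominated_convergence (hc.mul_right C) (fun j => ?_)
    (Eventually.of_forall fun k j => ?_)
  · refine ((hg.comp (tendsto_sub_atTop_nat (j + 2))).const_mul (c (j + 1))).congr' ?_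
    filter_upwards [eventually_ge_atTop (j + 2)] with k hk
    rw [if_pos hk, show k - (j + 1) = k - (j + 2) + 1 by omega]
    rfl
  · split_ifs with h
    · rw [norm_mul, show k - (j + 1) = k - (j + 2) + 1 by omega]
      exact mul_le_mul_of_nonneg_left (hC _ ⟨_, rfl⟩) (norm_nonneg _)
    · rw [norm_zero]
      exact mul_nonneg (norm_nonneg _) hC₀

end causalConv

section renewal

variable {a x f : ℕ → ℝ}

lemma renewal_monotone (ha : ∀ i, 0 ≤ a i) (hx : ∀ k, 1 ≤ k → x k = f k + causalConv a x k)
    (hf₁ : 0 ≤ f 1) (hf : Monotone fun n => f (n + 1)) : Monotone fun n => x (n + 1) := by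
  have hx₁ : x 1 = f 1 := by simpa using hx 1 le_rfl
  have step : ∀ k, 1 ≤ k → x k ≤ x (k + 1) := by
    intro k
    induction k using Nat.strong_induction_on with
    | _ k ih =>
      intro hk
      obtain ⟨m, rfl⟩ : ∃ m, k = m + 1 := ⟨k - 1, by omega⟩
      have hconv := causalConv_le_causalConv_succ ha (m + 1) (hx₁ ▸ hf₁)
        fun j hj hjk => ih j hjk hj
      rw [hx _ hk, hx (m + 1 + 1) (by omega)]
      linarith [hf (Nat.le_succ m)]
  exact monotone_nat_of_le_succ fun n => step (n + 1) (by omega)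

lemma renewal_le (ha : ∀ i, 0 ≤ a i) (hsa : Summable fun i => a (i + 1))
    (hA : ∑' i, a (i + 1) < 1) (hx : ∀ k, 1 ≤ k → x k = f k + causalConv a x k) {F : ℝ}
    (hF : 0 ≤ F) (hf : ∀ k, 1 ≤ k → f k ≤ F) :
    ∀ k, 1 ≤ k → x k ≤ F / (1 - ∑' i, a (i + 1)) := by
  set A := ∑' i, a (i + 1)
  have h1A : 0 < 1 - A := by linarith
  have hfix : F + A * (F / (1 - A)) = F / (1 - A) := by
    field_simp
    ring
  intro k
  induction k using Nat.strong_induction_on with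
  | _ k ih =>
    intro hk
    have hconv := causalConv_le_tsum_mul ha hsa (div_nonneg hF h1A.le) k
      fun j hj hjk => ih j hjk hj
    rw [hx k hk]
    linarith [hf k hk]

lemma tendsto_renewal (ha : ∀ i, 0 ≤ a i) (hsa : Summable fun i => a (i + 1))
    (hA : ∑' i, a (i + 1) < 1) (hx : ∀ k, 1 ≤ k → x k = f k + causalConv a x k)
    (hf₁ : 0 ≤ f 1) (hf : Monotone fun n => f (n + 1)) {φ : ℝ}
    (hφ : Tendsto (fun n => f (n + 1)) atTop (𝓝 φ)) :
    Tendsto (fun n => x (n + 1)) atTop (𝓝 (φ / (1 - ∑' i, a (i + 1)))) := by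
  have hfφ : ∀ k, 1 ≤ k → f k ≤ φ := fun k hk => by
    obtain ⟨m, rfl⟩ : ∃ m, k = m + 1 := ⟨k - 1, by omega⟩
    exact hf.ge_of_tendsto hφ m
  have hbdd : BddAbove (Set.range fun n => x (n + 1)) :=
    ⟨_, Set.forall_mem_range.2 fun n =>
      renewal_le ha hsa hA hx (hf₁.trans (hfφ 1 le_rfl)) hfφ (n + 1) (by omega)⟩
  have hL := tendsto_atTop_ciSup (renewal_monotone ha hx hf₁ hf) hbdd
  set L := ⨆ n, x (n + 1)
  have hfix : Tendsto (fun n => x (n + 1)) atTop (𝓝 (φ + (∑' i, a (i + 1)) * L)) :=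
    (hφ.add ((tendsto_causalConv hsa.abs hL).comp (tendsto_add_atTop_nat 1))).congr
      fun n => (hx (n + 1) (by omega)).symm
  have hLφ : L = φ / (1 - ∑' i, a (i + 1)) := by
    rw [eq_div_iff (by linarith)]
    linarith [tendsto_nhds_unique hL hfix]
  rwa [← hLφ]

end renewal
/-- Cesàro convergence of the second-order sequence `G₂`:
`(1/n) ∑_{k=1}^n G₂(k) → V/(2(1-A)³)`. -/
theorem inar_G2_cesaro (a v : ℕ → ℝ) (ha : ∀ i, 0 ≤ a i) (hv : ∀ i, 0 ≤ v i)
    (hsuma : Summable (fun i => a (i + 1)))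
    (hA : (∑' i : ℕ, a (i + 1)) < 1)
    (hsumv : Summable (fun i => v (i + 1)))
    (G1 G2 : ℕ → ℝ) (hG11 : G1 1 = 1)
    (hG1 : ∀ k ≥ 2, G1 k = 1 + ∑ i ∈ Finset.Icc 1 (k - 1), a i * G1 (k - i))
    (hG21 : G2 1 = 0)
    (hG2 : ∀ k ≥ 2, G2 k = (∑ i ∈ Finset.Icc 1 (k - 1), a i * G2 (k - i))
      + (1 / 2) * ∑ i ∈ Finset.Icc 1 (k - 1), v i * (G1 (k - i)) ^ 2) :
    Tendsto (fun n : ℕ => (∑ k ∈ Finset.Icc 1 n, G2 k) / (n : ℝ)) atTop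
      (nhds ((∑' i : ℕ, v (i + 1)) / (2 * (1 - ∑' i : ℕ, a (i + 1)) ^ 3))) := by
  set A := ∑' i : ℕ, a (i + 1)
  set V := ∑' i : ℕ, v (i + 1)
  set f₂ : ℕ → ℝ := fun k => 1 / 2 * causalConv v (fun j => G1 j ^ 2) k
  have hG1rec : ∀ k, 1 ≤ k → G1 k = 1 + causalConv a G1 k := fun k hk => by
    rcases hk.eq_or_lt with rfl | hk
    · simp [hG11]
    · exact hG1 k hk
  have hG2rec : ∀ k, 1 ≤ k → G2 k = f₂ k + causalConv a G2 k := fun k hk => by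
    rcases hk.eq_or_lt with rfl | hk
    · simp [f₂, hG21]
    · rw [hG2 k hk, add_comm]
      rfl
  have hG1mono : Monotone fun n => G1 (n + 1) :=
    renewal_monotone ha hG1rec zero_le_one monotone_const
  have hG1lim : Tendsto (fun n => G1 (n + 1)) atTop (𝓝 (1 / (1 - A))) :=
    tendsto_renewal ha hsuma hA hG1rec zero_le_one monotone_const tendsto_const_nhds
  have hG1sq_mono : Monotone fun n => G1 (n + 1) ^ 2 := fun m n hmn =>
    pow_le_pow_left₀ (by linarith [hG1mono (Nat.zero_le m)]) (hG1mono hmn) 2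
  have hf₂lim : Tendsto (fun n => f₂ (n + 1)) atTop (𝓝 (1 / 2 * (V * (1 / (1 - A)) ^ 2))) :=
    ((tendsto_causalConv hsumv.abs (hG1lim.pow 2)).comp (tendsto_add_atTop_nat 1)).const_mul _
  have hG2lim := tendsto_renewal ha hsuma hA hG2rec (by simp [f₂])
    ((causalConv_succ_monotone hv (sq_nonneg _) hG1sq_mono).const_mul (by norm_num)) hf₂lim
  have hlim : 1 / 2 * (V * (1 / (1 - A)) ^ 2) / (1 - A) = V / (2 * (1 - A) ^ 3) := by
    have : 1 - A ≠ 0 := by linarith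
    field_simp
  rw [← hlim]
  refine hG2lim.cesaro.congr fun n => ?_
  rw [sum_Icc_one_eq_sum_range, div_eq_inv_mul]
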